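/- If π: (X,T) → (Y,S) is a factor map, x ∈ X is a mean equicontinuous point, and π is open at x (for every neighborhood U of x, π(U) is a neighborhood of π(x)), then π(x) is a mean equicontinuous point of (Y,S). -/

import Mathlib

open Filter Topology MeasureTheory
open scoped Classical

noncomputable def avgDist {Z : Type*} [MetricSpace Z] (R : Z → Z) (x y : Z) (n : ℕ) : ℝ :=
  (n : ℝ)⁻¹ * ∑ i ∈ Finset.range n, dist (R^[i] x) (R^[i] y)

def MeanEquicontinuous {Z : Type*} [MetricSpace Z] (R : Z → Z) : Prop :=
  ∀ ε > 0, ∃ δ > 0, ∀ x y : Z, dist x y < δ →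
    Filter.limsup (avgDist R x y) Filter.atTop < ε

def MeanEqPtAt {Z : Type*} [MetricSpace Z] (R : Z → Z) (x : Z) : Prop :=
  ∀ ε > 0, ∃ δ > 0, ∀ y : Z, dist x y < δ →
    Filter.limsup (avgDist R x y) Filter.atTop < ε

def MeanSensitive {Z : Type*} [MetricSpace Z] (R : Z → Z) : Prop :=
  ∃ δ > 0, ∀ x : Z, ∀ ε > 0, ∃ y : Z, dist x y < ε ∧
    δ < Filter.limsup (avgDist R x y) Filter.atTop

/-!
Since `π` is uniformly continuous and `Y` is bounded, for every `ε > 0` there is `C ≥ 0` with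
`dist (π a) (π b) ≤ ε + C * dist a b` for all `a b`. Averaging this along `T`-orbits, which `π`
carries to `S`-orbits, bounds the mean distance of `π x, π w` by `ε` plus `C` times the mean
distance of `x, w`, and openness of `π` at `x` writes every point near `π x` as `π w` with `w`
near `x`.
-/

lemma UniformContinuous.exists_dist_le_add_mul_dist {X Y : Type*} [PseudoMetricSpace X]
    [PseudoMetricSpace Y] [BoundedSpace Y] {f : X → Y} (hf : UniformContinuous f)
    {ε : ℝ} (hε : 0 < ε) : ∃ C ≥ 0, ∀ a b, dist (f a) (f b) ≤ ε + C * dist a b := by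
  obtain ⟨η, hη, hfη⟩ := Metric.uniformContinuous_iff.mp hf ε hε
  set D := Metric.diam (Set.univ : Set Y)
  have hD : 0 ≤ D := Metric.diam_nonneg
  refine ⟨D / η, by positivity, fun a b => ?_⟩
  rcases lt_or_ge (dist a b) η with hab | hab
  · have : 0 ≤ D / η * dist a b := by positivity
    linarith [hfη hab]
  · calc dist (f a) (f b) ≤ D :=
          Metric.dist_le_diam_of_mem (Bornology.IsBounded.all _) (Set.mem_univ _) (Set.mem_univ _)
      _ = D / η * η := by field_simp
      _ ≤ D / η * dist a b := by gcongr
      _ ≤ ε + D / η * dist a b := by linarith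

section avgDist

variable {Z : Type*} [MetricSpace Z]

lemma avgDist_nonneg (R : Z → Z) (x y : Z) (n : ℕ) : 0 ≤ avgDist R x y n := by
  unfold avgDist
  positivity

lemma avgDist_le_diam [BoundedSpace Z] (R : Z → Z) (x y : Z) (n : ℕ) :
    avgDist R x y n ≤ Metric.diam (Set.univ : Set Z) := by
  rcases Nat.eq_zero_or_pos n with rfl | hn
  · simp [avgDist, Metric.diam_nonneg]
  unfold avgDist
  rw [inv_mul_le_iff₀ (by exact_mod_cast hn)]
  calc ∑ i ∈ Finset.range n, dist (R^[i] x) (R^[i] y)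
      ≤ ∑ _i ∈ Finset.range n, Metric.diam (Set.univ : Set Z) :=
        Finset.sum_le_sum fun i _ =>
          Metric.dist_le_diam_of_mem (Bornology.IsBounded.all _) (Set.mem_univ _) (Set.mem_univ _)
    _ = n * Metric.diam (Set.univ : Set Z) := by simp

end avgDist

section Semiconj

variable {X Y : Type*} [MetricSpace X] [MetricSpace Y] {T : X → X} {S : Y → Y} {π : X → Y}
  {ε C : ℝ}

lemma avgDist_le_add_mul_avgDist (hπ : Function.Semiconj π T S)
    (hdist : ∀ a b, dist (π a) (π b) ≤ ε + C * dist a b) (x w : X) {n : ℕ} (hn : n ≠ 0) :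
    avgDist S (π x) (π w) n ≤ ε + C * avgDist T x w n := by
  unfold avgDist
  calc (n : ℝ)⁻¹ * ∑ i ∈ Finset.range n, dist (S^[i] (π x)) (S^[i] (π w))
      = (n : ℝ)⁻¹ * ∑ i ∈ Finset.range n, dist (π (T^[i] x)) (π (T^[i] w)) := by
        simp only [(hπ.iterate_right _).eq]
    _ ≤ (n : ℝ)⁻¹ * ∑ i ∈ Finset.range n, (ε + C * dist (T^[i] x) (T^[i] w)) := by
        gcongr with i
        exact hdist _ _
    _ = ε + C * ((n : ℝ)⁻¹ * ∑ i ∈ Finset.range n, dist (T^[i] x) (T^[i] w)) := by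
        rw [Finset.sum_add_distrib, Finset.sum_const, Finset.card_range, nsmul_eq_mul,
          ← Finset.mul_sum]
        field_simp

lemma limsup_avgDist_le_of_semiconj [BoundedSpace X] (hπ : Function.Semiconj π T S)
    (hC : 0 ≤ C) (hdist : ∀ a b, dist (π a) (π b) ≤ ε + C * dist a b) {x w : X} {r : ℝ}
    (hr : limsup (avgDist T x w) atTop < r) :
    limsup (avgDist S (π x) (π w)) atTop ≤ ε + C * r := by
  have hbdd : IsBoundedUnder (· ≤ ·) atTop (avgDist T x w) :=
    isBoundedUnder_of ⟨_, avgDist_le_diam T x w⟩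
  refine limsup_le_of_le (isCoboundedUnder_le_of_le atTop (avgDist_nonneg S _ _)) ?_
  filter_upwards [eventually_lt_of_limsup_lt hr hbdd, eventually_ne_atTop 0] with n hlt hn
  calc avgDist S (π x) (π w) n ≤ ε + C * avgDist T x w n :=
        avgDist_le_add_mul_avgDist hπ hdist x w hn
    _ ≤ ε + C * r := by gcongr

end Semiconj

theorem meanEqPt_image_of_open_at_point_general
    {X Y : Type*} [MetricSpace X] [CompactSpace X] [MetricSpace Y] [CompactSpace Y]
    (T : X → X) (S : Y → Y)
    (π : X → Y) (hπ : Continuous π)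
    (hcomm : π ∘ T = S ∘ π)
    (x : X) (hx : MeanEqPtAt T x)
    (hopen : ∀ U ∈ nhds x, π '' U ∈ nhds (π x)) :
    MeanEqPtAt S (π x) := by
  intro ε hε
  obtain ⟨C, hC, hπC⟩ :=
    (CompactSpace.uniformContinuous_of_continuous hπ).exists_dist_le_add_mul_dist (half_pos hε)
  obtain ⟨δ₀, hδ₀, hxδ₀⟩ := hx (ε / (2 * (C + 1))) (by positivity)
  obtain ⟨δ, hδ, hball⟩ := Metric.mem_nhds_iff.mp (hopen _ (Metric.ball_mem_nhds x hδ₀))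
  refine ⟨δ, hδ, fun y hy => ?_⟩
  obtain ⟨w, hw, rfl⟩ := hball (Metric.mem_ball'.mpr hy)
  have hsemi : Function.Semiconj π T S := congrFun hcomm
  calc limsup (avgDist S (π x) (π w)) atTop ≤ ε / 2 + C * (ε / (2 * (C + 1))) :=
        limsup_avgDist_le_of_semiconj hsemi hC hπC (hxδ₀ w (Metric.mem_ball'.mp hw))
    _ < ε := by
        have : C * (ε / (2 * (C + 1))) < ε / 2 := by
          rw [mul_div_assoc', div_lt_div_iff₀ (by positivity) two_pos]
          nlinarith
        linarith

theorem meanEqPt_image_of_open_at_point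
    {X Y : Type*} [MetricSpace X] [CompactSpace X] [MetricSpace Y] [CompactSpace Y]
    (T : X → X) (S : Y → Y) (hT : Continuous T) (hS : Continuous S)
    (π : X → Y) (hπ : Continuous π) (hsurj : Function.Surjective π)
    (hcomm : π ∘ T = S ∘ π)
    (x : X) (hx : MeanEqPtAt T x)
    (hopen : ∀ U ∈ nhds x, π '' U ∈ nhds (π x)) :
    MeanEqPtAt S (π x) :=
  meanEqPt_image_of_open_at_point_general T S π hπ hcomm x hx hopen
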